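/- There exists a constant K < ∞, depending only on d, on the bounds for σ, σ' and on the compact sets X, Y, C, W¹, W² (in particular independent of N₂), such that for every N₂ ∈ ℕ, almost surely, for all t ∈ [0,1], all i ∈ {1,…,N₂} and all x ∈ X: |Ĉ_t^i| ≤ K, ‖Ŵ_t^1‖ ≤ K, |Ŵ_t^{2,i}| ≤ K, |g_t^{N₂}(x)| ≤ K, and |V_t^{N₂}(x)| ≤ K. -/

import Mathlib

open MeasureTheory
open scoped RealInnerProductSpace BigOperators

/-- `ℝ^d` as a Euclidean space. -/
abbrev Euc (d : ℕ) := EuclideanSpace ℝ (Fin d)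

/-- The quantity `Z̃_t^c(x) = ∫∫ W̃_t^{2,c,w,u} σ(W̃_t^{1,w}·x) μ_{W²}(du) μ_{W¹}(dw)`
of the limiting two-layer system. -/
noncomputable def limZ {d : ℕ} (σ : ℝ → ℝ) (μW1 : Measure (Euc d)) (μW2 : Measure ℝ)
    (W1t : ℝ → Euc d → Euc d) (W2t : ℝ → ℝ → Euc d → ℝ → ℝ)
    (t c : ℝ) (x : Euc d) : ℝ :=
  ∫ w, (∫ u, W2t t c w u * σ (⟪W1t t w, x⟫) ∂μW2) ∂μW1

/-- The network output `g_t(x) = ∫ C̃_t^c σ(Z̃_t^c(x)) μ_c(dc)` of the limiting system. -/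
noncomputable def limG {d : ℕ} (σ : ℝ → ℝ) (μc : Measure ℝ) (μW1 : Measure (Euc d))
    (μW2 : Measure ℝ) (Ct : ℝ → ℝ → ℝ) (W1t : ℝ → Euc d → Euc d)
    (W2t : ℝ → ℝ → Euc d → ℝ → ℝ) (t : ℝ) (x : Euc d) : ℝ :=
  ∫ c, Ct t c * σ (limZ σ μW1 μW2 W1t W2t t c x) ∂μc

/-- The quantity `V_t^w(x) = ∫ C̃_t^c σ'(Z̃_t^c(x)) (∫ W̃_t^{2,c,w,u} μ_{W²}(du)) μ_c(dc)`
of the limiting system. -/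
noncomputable def limV {d : ℕ} (σ : ℝ → ℝ) (μc : Measure ℝ) (μW1 : Measure (Euc d))
    (μW2 : Measure ℝ) (Ct : ℝ → ℝ → ℝ) (W1t : ℝ → Euc d → Euc d)
    (W2t : ℝ → ℝ → Euc d → ℝ → ℝ) (t : ℝ) (w : Euc d) (x : Euc d) : ℝ :=
  ∫ c, Ct t c * deriv σ (limZ σ μW1 μW2 W1t W2t t c x) * (∫ u, W2t t c w u ∂μW2) ∂μc

/-- `(Ct, W1t, W2t)` is a solution of the limiting two-layer system on `[0,1]`:
continuity in time, joint measurability in the parameters, and the integral equations. -/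
def IsLimitSolution {d : ℕ} (σ : ℝ → ℝ) (π : Measure (Euc d × ℝ))
    (μc : Measure ℝ) (μW1 : Measure (Euc d)) (μW2 : Measure ℝ)
    (SC : Set ℝ) (SW1 : Set (Euc d)) (SW2 : Set ℝ)
    (Ct : ℝ → ℝ → ℝ) (W1t : ℝ → Euc d → Euc d) (W2t : ℝ → ℝ → Euc d → ℝ → ℝ) : Prop :=
  (∀ c ∈ SC, ContinuousOn (fun t => Ct t c) (Set.Icc 0 1)) ∧
  (∀ w ∈ SW1, ContinuousOn (fun t => W1t t w) (Set.Icc 0 1)) ∧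
  (∀ c ∈ SC, ∀ w ∈ SW1, ∀ u ∈ SW2, ContinuousOn (fun t => W2t t c w u) (Set.Icc 0 1)) ∧
  (∀ t, Measurable (Ct t)) ∧
  (∀ t, Measurable (W1t t)) ∧
  (∀ t, Measurable (fun q : ℝ × Euc d × ℝ => W2t t q.1 q.2.1 q.2.2)) ∧
  (∀ t ∈ Set.Icc (0:ℝ) 1, ∀ c ∈ SC,
    Ct t c = c + ∫ s in Set.Icc (0:ℝ) t,
      (∫ p, (p.2 - limG σ μc μW1 μW2 Ct W1t W2t s p.1) *
        σ (limZ σ μW1 μW2 W1t W2t s c p.1) ∂π)) ∧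
  (∀ t ∈ Set.Icc (0:ℝ) 1, ∀ w ∈ SW1,
    W1t t w = w + ∫ s in Set.Icc (0:ℝ) t,
      (∫ p, ((p.2 - limG σ μc μW1 μW2 Ct W1t W2t s p.1) *
        limV σ μc μW1 μW2 Ct W1t W2t s w p.1 *
        deriv σ (⟪W1t s w, p.1⟫)) • p.1 ∂π)) ∧
  (∀ t ∈ Set.Icc (0:ℝ) 1, ∀ c ∈ SC, ∀ w ∈ SW1, ∀ u ∈ SW2,
    W2t t c w u = u + ∫ s in Set.Icc (0:ℝ) t,
      (∫ p, (p.2 - limG σ μc μW1 μW2 Ct W1t W2t s p.1) * Ct s c *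
        deriv σ (limZ σ μW1 μW2 W1t W2t s c p.1) * σ (⟪W1t s w, p.1⟫) ∂π))

/-- The network output `g_t^{N₂}(x) = N₂⁻¹ ∑ᵢ Ĉ_t^i σ(Ẑ_t^i(x))` of the `N₂`-particle system. -/
noncomputable def gN {Ω : Type*} {d N₂ : ℕ} (σ : ℝ → ℝ)
    (Chat : ℝ → Fin N₂ → Ω → ℝ) (Zhat : ℝ → Fin N₂ → Euc d → Ω → ℝ)
    (t : ℝ) (x : Euc d) (ω : Ω) : ℝ :=
  (N₂ : ℝ)⁻¹ * ∑ i, Chat t i ω * σ (Zhat t i x ω)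

/-- The quantity `V_t^{N₂}(x) = N₂⁻¹ ∑ᵢ Ĉ_t^i σ'(Ẑ_t^i(x)) Ŵ_t^{2,i}` of the particle system. -/
noncomputable def VN {Ω : Type*} {d N₂ : ℕ} (σ : ℝ → ℝ)
    (Chat : ℝ → Fin N₂ → Ω → ℝ) (W2hat : ℝ → Fin N₂ → Ω → ℝ)
    (Zhat : ℝ → Fin N₂ → Euc d → Ω → ℝ)
    (t : ℝ) (x : Euc d) (ω : Ω) : ℝ :=
  (N₂ : ℝ)⁻¹ * ∑ i, Chat t i ω * deriv σ (Zhat t i x ω) * W2hat t i ω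

/-- The `N₂`-particle system: initial data with the prescribed (i.i.d. and mutually
independent) joint law, measurability, continuity in time, the conditional-expectation
characterization of `Ẑ`, and the integral equations. -/
def IsParticleSystem {Ω : Type*} [MeasurableSpace Ω] (P : Measure Ω)
    {d : ℕ} (σ : ℝ → ℝ) (π : Measure (Euc d × ℝ))
    (μc : Measure ℝ) (μW1 : Measure (Euc d)) (μW2 : Measure ℝ)
    {N₂ : ℕ}
    (C0 : Fin N₂ → Ω → ℝ) (W0 : Ω → Euc d) (W02 : Fin N₂ → Ω → ℝ)
    (Chat : ℝ → Fin N₂ → Ω → ℝ) (W1hat : ℝ → Ω → Euc d)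
    (W2hat : ℝ → Fin N₂ → Ω → ℝ) (Zhat : ℝ → Fin N₂ → Euc d → Ω → ℝ) : Prop :=
  (∀ i, Measurable (C0 i)) ∧ Measurable W0 ∧ (∀ i, Measurable (W02 i)) ∧
  (Measure.map (fun ω => ((fun i => C0 i ω), W0 ω, fun i => W02 i ω)) P
    = (Measure.pi fun _ : Fin N₂ => μc).prod
        (μW1.prod (Measure.pi fun _ : Fin N₂ => μW2))) ∧
  (∀ t i, Measurable (fun ω => Chat t i ω)) ∧
  (∀ t, Measurable (W1hat t)) ∧
  (∀ t i, Measurable (fun ω => W2hat t i ω)) ∧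
  (∀ t i x, Measurable (fun ω => Zhat t i x ω)) ∧
  (∀ ω i, ContinuousOn (fun t => Chat t i ω) (Set.Icc 0 1)) ∧
  (∀ ω, ContinuousOn (fun t => W1hat t ω) (Set.Icc 0 1)) ∧
  (∀ ω i, ContinuousOn (fun t => W2hat t i ω) (Set.Icc 0 1)) ∧
  (∀ t ∈ Set.Icc (0:ℝ) 1, ∀ i x,
    (fun ω => Zhat t i x ω)
      =ᵐ[P] P[(fun ω => W2hat t i ω * σ (⟪W1hat t ω, x⟫)) |
              MeasurableSpace.comap (fun ω (j : Fin N₂) => C0 j ω) MeasurableSpace.pi]) ∧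
  (∀ t ∈ Set.Icc (0:ℝ) 1, ∀ i, ∀ᵐ ω ∂P,
    Chat t i ω = C0 i ω + ∫ s in Set.Icc (0:ℝ) t,
      (∫ p, (p.2 - gN σ Chat Zhat s p.1 ω) * σ (Zhat s i p.1 ω) ∂π)) ∧
  (∀ t ∈ Set.Icc (0:ℝ) 1, ∀ᵐ ω ∂P,
    W1hat t ω = W0 ω + ∫ s in Set.Icc (0:ℝ) t,
      (∫ p, ((p.2 - gN σ Chat Zhat s p.1 ω) * VN σ Chat W2hat Zhat s p.1 ω *
        deriv σ (⟪W1hat s ω, p.1⟫)) • p.1 ∂π)) ∧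
  (∀ t ∈ Set.Icc (0:ℝ) 1, ∀ i, ∀ᵐ ω ∂P,
    W2hat t i ω = W02 i ω + ∫ s in Set.Icc (0:ℝ) t,
      (∫ p, (p.2 - gN σ Chat Zhat s p.1 ω) * Chat s i ω *
        deriv σ (Zhat s i p.1 ω) * σ (⟪W1hat s ω, p.1⟫) ∂π))

/-- The error function `E_t^{N₂}(i,x)` comparing the `i`-th particle with the limiting
system evaluated at the random initial parameters. -/
noncomputable def errF {Ω : Type*} {d N₂ : ℕ} (σ : ℝ → ℝ)
    (μW1 : Measure (Euc d)) (μW2 : Measure ℝ)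
    (Ct : ℝ → ℝ → ℝ) (W1t : ℝ → Euc d → Euc d) (W2t : ℝ → ℝ → Euc d → ℝ → ℝ)
    (C0 : Fin N₂ → Ω → ℝ) (W0 : Ω → Euc d) (W02 : Fin N₂ → Ω → ℝ)
    (Chat : ℝ → Fin N₂ → Ω → ℝ) (W1hat : ℝ → Ω → Euc d)
    (W2hat : ℝ → Fin N₂ → Ω → ℝ) (Zhat : ℝ → Fin N₂ → Euc d → Ω → ℝ)
    (t : ℝ) (i : Fin N₂) (x : Euc d) (ω : Ω) : ℝ :=
  (Chat t i ω - Ct t (C0 i ω))^2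
  + ‖W1hat t ω - W1t t (W0 ω)‖^2
  + (W2hat t i ω - W2t t (C0 i ω) (W0 ω) (W02 i ω))^2
  + (σ (Zhat t i x ω) - σ (limZ σ μW1 μW2 W1t W2t t (C0 i ω) x))^2
  + (Zhat t i x ω - limZ σ μW1 μW2 W1t W2t t (C0 i ω) x)^2

open MeasureTheory Filter Set

lemma avg_abs_le {N : ℕ} (hN : 0 < N) (g : Fin N → ℝ) {c : ℝ} (h : ∀ i, |g i| ≤ c) :
    |(N:ℝ)⁻¹ * ∑ i, g i| ≤ c := by
  have hc : 0 ≤ c := le_trans (abs_nonneg _) (h ⟨0, hN⟩)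
  have hN' : (0:ℝ) < N := Nat.cast_pos.mpr hN
  have h1 : |∑ i, g i| ≤ (N:ℝ) * c := by
    calc |∑ i, g i| ≤ ∑ i, |g i| := Finset.abs_sum_le_sum_abs _ _
    _ ≤ ∑ _i : Fin N, c := Finset.sum_le_sum fun i _ => h i
    _ = (N:ℝ) * c := by simp [Finset.sum_const, Finset.card_univ, nsmul_eq_mul]
  rw [abs_mul, abs_inv, Nat.abs_cast]
  calc (N:ℝ)⁻¹ * |∑ i, g i| ≤ (N:ℝ)⁻¹ * ((N:ℝ) * c) := by
        exact mul_le_mul_of_nonneg_left h1 (by positivity)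
  _ = c := by field_simp

lemma rat_dense_le (A : ℝ → ℝ) (hA : ContinuousOn A (Set.Icc 0 1))
    (h : ∀ q : ℚ, (q:ℝ) ∈ Set.Icc (0:ℝ) 1 → A q ≤ 0) :
    ∀ t ∈ Set.Icc (0:ℝ) 1, A t ≤ 0 := by
  intro t ht
  rcases eq_or_lt_of_le ht.1 with h0 | h0
  · have h00 : ((0:ℚ):ℝ) ∈ Set.Icc (0:ℝ) 1 := by norm_num
    simpa [← h0] using h 0 h00
  · have hseq : ∀ j : ℕ, ∃ q : ℚ, max 0 (t - ((j:ℝ)+1)⁻¹) < (q:ℝ) ∧ (q:ℝ) < t := by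
      intro j
      refine exists_rat_btwn (max_lt h0 ?_)
      have : (0:ℝ) < ((j:ℝ)+1)⁻¹ := by positivity
      linarith
    choose q hq1 hq2 using hseq
    have hmem : ∀ j, ((q j : ℝ)) ∈ Set.Icc (0:ℝ) 1 :=
      fun j => ⟨le_of_lt (lt_of_le_of_lt (le_max_left _ _) (hq1 j)),
        le_trans (le_of_lt (hq2 j)) ht.2⟩
    have hinv : Tendsto (fun j : ℕ => ((j:ℝ)+1)⁻¹) atTop (nhds 0) := by
      simpa [one_div] using tendsto_one_div_add_atTop_nhds_zero_nat (𝕜 := ℝ)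
    have htend : Tendsto (fun j => (q j : ℝ)) atTop (nhds t) := by
      refine tendsto_of_tendsto_of_tendsto_of_le_of_le
        (g := fun j : ℕ => t - ((j:ℝ)+1)⁻¹) (h := fun _ : ℕ => t) ?_ tendsto_const_nhds
        (fun j => le_of_lt (lt_of_le_of_lt (le_max_right _ _) (hq1 j)))
        (fun j => (hq2 j).le)
      simpa using tendsto_const_nhds.sub hinv
    have htend2 : Tendsto (fun j => A (q j)) atTop (nhds (A t)) :=
      (hA t ht).tendsto.comp
        (tendsto_nhdsWithin_of_tendsto_nhds_of_eventually_within _ htend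
          (Eventually.of_forall hmem))
    exact le_of_tendsto htend2 (Eventually.of_forall fun j => h (q j) (hmem j))

lemma compact_norm_bound {E : Type*} [SeminormedAddCommGroup E] {S : Set E}
    (hS : IsCompact S) : ∃ R : ℝ, 0 ≤ R ∧ ∀ x ∈ S, ‖x‖ ≤ R := by
  obtain ⟨C, hC⟩ := isBounded_iff_forall_norm_le.mp hS.isBounded
  exact ⟨max C 0, le_max_right _ _, fun x hx => (hC x hx).trans (le_max_left _ _)⟩


set_option maxHeartbeats 4000000 in
/-- **A priori bounds for the `N₂`-particle system.** There is a constant `K` depending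
only on `d`, the bound `B` for `σ, σ'` and the compact sets `X, Y, C, W¹, W²` such that,
almost surely, all particle processes and the derived quantities `g^{N₂}, V^{N₂}` are
bounded by `K` on `[0,1]`, uniformly in `N₂`. -/
theorem particle_system_apriori_bounds
    (d : ℕ) (B : ℝ)
    (SX : Set (Euc d)) (SY : Set ℝ) (SC : Set ℝ) (SW1 : Set (Euc d)) (SW2 : Set ℝ)
    (hSX : IsCompact SX) (hSY : IsCompact SY) (hSC : IsCompact SC)
    (hSW1 : IsCompact SW1) (hSW2 : IsCompact SW2) :
    ∃ K : ℝ, ∀ (σ : ℝ → ℝ), ContDiff ℝ 2 σ →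
      (∀ z, |σ z| ≤ B) → (∀ z, |deriv σ z| ≤ B) →
      (∃ B'', ∀ z, |deriv (deriv σ) z| ≤ B'') →
      ∀ (π : Measure (Euc d × ℝ)) (μc : Measure ℝ) (μW1 : Measure (Euc d)) (μW2 : Measure ℝ),
        IsProbabilityMeasure π → IsProbabilityMeasure μc →
        IsProbabilityMeasure μW1 → IsProbabilityMeasure μW2 →
        π ((SX ×ˢ SY)ᶜ) = 0 → μc SCᶜ = 0 → μW1 SW1ᶜ = 0 → μW2 SW2ᶜ = 0 →
      ∀ (N₂ : ℕ), 0 < N₂ →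
      ∀ (Ω : Type) (_ : MeasurableSpace Ω) (P : Measure Ω), IsProbabilityMeasure P →
      ∀ (C0 : Fin N₂ → Ω → ℝ) (W0 : Ω → Euc d) (W02 : Fin N₂ → Ω → ℝ)
        (Chat : ℝ → Fin N₂ → Ω → ℝ) (W1hat : ℝ → Ω → Euc d)
        (W2hat : ℝ → Fin N₂ → Ω → ℝ) (Zhat : ℝ → Fin N₂ → Euc d → Ω → ℝ),
        IsParticleSystem P σ π μc μW1 μW2 C0 W0 W02 Chat W1hat W2hat Zhat →
      ∀ᵐ ω ∂P, ∀ t ∈ Set.Icc (0:ℝ) 1,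
        (∀ i, |Chat t i ω| ≤ K) ∧
        ‖W1hat t ω‖ ≤ K ∧
        (∀ i, |W2hat t i ω| ≤ K) ∧
        (∀ x ∈ SX, |gN σ Chat Zhat t x ω| ≤ K) ∧
        (∀ x ∈ SX, |VN σ Chat W2hat Zhat t x ω| ≤ K) := by
  obtain ⟨RX, hRX0, hRX⟩ := compact_norm_bound hSX
  obtain ⟨RY, hRY0, hRY⟩ := compact_norm_bound hSY
  obtain ⟨RC, hRC0, hRC⟩ := compact_norm_bound hSC
  obtain ⟨RW1, hRW10, hRW1⟩ := compact_norm_bound hSW1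
  obtain ⟨RW2, hRW20, hRW2⟩ := compact_norm_bound hSW2
  obtain ⟨b, hb_def⟩ : ∃ b : ℝ, b = B^2 := ⟨_, rfl⟩
  obtain ⟨a, ha_def⟩ : ∃ a : ℝ, a = RC + B * RY := ⟨_, rfl⟩
  obtain ⟨n, hn_def⟩ : ∃ n : ℕ, n = ⌈2*b⌉₊ + 1 := ⟨_, rfl⟩
  obtain ⟨K1, hK1_def⟩ : ∃ K1 : ℝ, K1 = a * (2 + 2*b)^n := ⟨_, rfl⟩
  obtain ⟨C2, hC2_def⟩ : ∃ C2 : ℝ, C2 = (RY + B*K1) * K1 * B * B := ⟨_, rfl⟩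
  obtain ⟨K2, hK2_def⟩ : ∃ K2 : ℝ, K2 = RW2 + C2 := ⟨_, rfl⟩
  obtain ⟨C3, hC3_def⟩ : ∃ C3 : ℝ, C3 = (RY + B*K1) * (B*(K1*K2)) * B * RX := ⟨_, rfl⟩
  obtain ⟨K3, hK3_def⟩ : ∃ K3 : ℝ, K3 = RW1 + C3 := ⟨_, rfl⟩
  refine ⟨max K1 (max K2 (max K3 (max (B*K1) (B*(K1*K2))))), ?_⟩
  intro σ _hσ hB hB' _hB'' π μc μW1 μW2 hπ hμc hμ1 hμ2 hπn hμcn hμ1n hμ2n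
    N₂ hN₂ Ω mΩ P hP C0 W0 W02 Chat W1hat W2hat Zhat hPS
  have hB0 : 0 ≤ B := (abs_nonneg (σ 0)).trans (hB 0)
  obtain ⟨hC0m, hW0m, hW02m, hlaw, _hCm, _hW1m, _hW2m, _hZm, hCc, hW1c, hW2c, _hZc,
    heqC, heqW1, heqW2⟩ := hPS
  have hb0 : 0 ≤ b := by rw [hb_def]; positivity
  have ha0 : 0 ≤ a := by rw [ha_def]; exact add_nonneg hRC0 (mul_nonneg hB0 hRY0)
  have honeple : (1:ℝ) ≤ 2 + 2*b := by linarith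
  have hK10 : 0 ≤ K1 := by rw [hK1_def]; exact mul_nonneg ha0 (pow_nonneg (by linarith) n)
  have hC20 : 0 ≤ C2 := by
    rw [hC2_def]
    exact mul_nonneg (mul_nonneg (mul_nonneg (add_nonneg hRY0 (mul_nonneg hB0 hK10)) hK10) hB0) hB0
  have hK20 : 0 ≤ K2 := by rw [hK2_def]; exact add_nonneg hRW20 hC20
  have hC30 : 0 ≤ C3 := by
    rw [hC3_def]
    exact mul_nonneg (mul_nonneg (mul_nonneg (add_nonneg hRY0 (mul_nonneg hB0 hK10))
      (mul_nonneg hB0 (mul_nonneg hK10 hK20))) hB0) hRX0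
  have hK30 : 0 ≤ K3 := by rw [hK3_def]; exact add_nonneg hRW10 hC30
  -- a.e. events
  have hπae : ∀ᵐ p ∂π, p ∈ SX ×ˢ SY := by
    rw [MeasureTheory.ae_iff]; exact hπn
  obtain ⟨T, hT_def⟩ : ∃ T : Ω → (Fin N₂ → ℝ) × (Euc d) × (Fin N₂ → ℝ),
      T = fun ω => (fun i => C0 i ω, W0 ω, fun i => W02 i ω) := ⟨_, rfl⟩
  rw [← hT_def] at hlaw
  have hTm : Measurable T := hT_def ▸
    (measurable_pi_lambda _ fun i => hC0m i).prodMk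
      (hW0m.prodMk (measurable_pi_lambda _ fun i => hW02m i))
  have hC0ae : ∀ᵐ ω ∂P, ∀ i, C0 i ω ∈ SC := by
    rw [ae_all_iff]
    intro i
    rw [MeasureTheory.ae_iff]
    have hset : {ω | ¬ C0 i ω ∈ SC} =
        T ⁻¹' (((fun v : Fin N₂ → ℝ => v i) ⁻¹' SCᶜ) ×ˢ (Set.univ : Set (Euc d × (Fin N₂ → ℝ)))) := by
      ext ω; simp [hT_def, Function.eval]
    have hms : MeasurableSet (((fun v : Fin N₂ → ℝ => v i) ⁻¹' SCᶜ) ×ˢ (Set.univ : Set (Euc d × (Fin N₂ → ℝ)))) :=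
      ((measurable_pi_apply i) hSC.isClosed.measurableSet.compl).prod MeasurableSet.univ
    rw [hset, ← Measure.map_apply hTm hms, hlaw, Measure.prod_prod]
    have h0 : Measure.pi (fun _ : Fin N₂ => μc) ((fun v : Fin N₂ → ℝ => v i) ⁻¹' SCᶜ) = 0 :=
      Measure.pi_eval_preimage_null (μ := fun _ : Fin N₂ => μc) hμcn
    rw [h0, zero_mul]
  have hW0ae : ∀ᵐ ω ∂P, W0 ω ∈ SW1 := by
    rw [MeasureTheory.ae_iff]
    have hset : {ω | ¬ W0 ω ∈ SW1} =
        T ⁻¹' ((Set.univ : Set (Fin N₂ → ℝ)) ×ˢ (SW1ᶜ ×ˢ (Set.univ : Set (Fin N₂ → ℝ)))) := by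
      ext ω; simp [hT_def]
    have hms : MeasurableSet ((Set.univ : Set (Fin N₂ → ℝ)) ×ˢ
        (SW1ᶜ ×ˢ (Set.univ : Set (Fin N₂ → ℝ)))) :=
      MeasurableSet.univ.prod ((hSW1.isClosed.measurableSet.compl).prod MeasurableSet.univ)
    rw [hset, ← Measure.map_apply hTm hms, hlaw, Measure.prod_prod, Measure.prod_prod, hμ1n]
    simp
  have hW02ae : ∀ᵐ ω ∂P, ∀ i, W02 i ω ∈ SW2 := by
    rw [ae_all_iff]
    intro i
    rw [MeasureTheory.ae_iff]
    have hset : {ω | ¬ W02 i ω ∈ SW2} =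
        T ⁻¹' ((Set.univ : Set (Fin N₂ → ℝ)) ×ˢ
          ((Set.univ : Set (Euc d)) ×ˢ ((fun v : Fin N₂ → ℝ => v i) ⁻¹' SW2ᶜ))) := by
      ext ω; simp [hT_def, Function.eval]
    have hms : MeasurableSet ((Set.univ : Set (Fin N₂ → ℝ)) ×ˢ
        ((Set.univ : Set (Euc d)) ×ˢ ((fun v : Fin N₂ → ℝ => v i) ⁻¹' SW2ᶜ))) :=
      MeasurableSet.univ.prod (MeasurableSet.univ.prod
        ((measurable_pi_apply i) hSW2.isClosed.measurableSet.compl))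
    rw [hset, ← Measure.map_apply hTm hms, hlaw, Measure.prod_prod, Measure.prod_prod]
    have h0 : Measure.pi (fun _ : Fin N₂ => μW2) ((fun v : Fin N₂ → ℝ => v i) ⁻¹' SW2ᶜ) = 0 :=
      Measure.pi_eval_preimage_null (μ := fun _ : Fin N₂ => μW2) hμ2n
    rw [h0]
    simp
  have heqCae : ∀ᵐ ω ∂P, ∀ q : ℚ, (q:ℝ) ∈ Set.Icc (0:ℝ) 1 → ∀ i,
      Chat q i ω = C0 i ω + ∫ s in Set.Icc (0:ℝ) (q:ℝ),
        (∫ p, (p.2 - gN σ Chat Zhat s p.1 ω) * σ (Zhat s i p.1 ω) ∂π) := by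
    rw [ae_all_iff]
    intro q
    by_cases hq : (q:ℝ) ∈ Set.Icc (0:ℝ) 1
    · filter_upwards [ae_all_iff.mpr fun i => heqC q hq i] with ω hω _ i
      exact hω i
    · filter_upwards with ω hq'
      exact absurd hq' hq
  have heqW1ae : ∀ᵐ ω ∂P, ∀ q : ℚ, (q:ℝ) ∈ Set.Icc (0:ℝ) 1 →
      W1hat q ω = W0 ω + ∫ s in Set.Icc (0:ℝ) (q:ℝ),
        (∫ p, ((p.2 - gN σ Chat Zhat s p.1 ω) * VN σ Chat W2hat Zhat s p.1 ω *
          deriv σ (⟪W1hat s ω, p.1⟫)) • p.1 ∂π) := by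
    rw [ae_all_iff]
    intro q
    by_cases hq : (q:ℝ) ∈ Set.Icc (0:ℝ) 1
    · filter_upwards [heqW1 q hq] with ω hω _
      exact hω
    · filter_upwards with ω hq'
      exact absurd hq' hq
  have heqW2ae : ∀ᵐ ω ∂P, ∀ q : ℚ, (q:ℝ) ∈ Set.Icc (0:ℝ) 1 → ∀ i,
      W2hat q i ω = W02 i ω + ∫ s in Set.Icc (0:ℝ) (q:ℝ),
        (∫ p, (p.2 - gN σ Chat Zhat s p.1 ω) * Chat s i ω *
          deriv σ (Zhat s i p.1 ω) * σ (⟪W1hat s ω, p.1⟫) ∂π) := by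
    rw [ae_all_iff]
    intro q
    by_cases hq : (q:ℝ) ∈ Set.Icc (0:ℝ) 1
    · filter_upwards [ae_all_iff.mpr fun i => heqW2 q hq i] with ω hω _ i
      exact hω i
    · filter_upwards with ω hq'
      exact absurd hq' hq
  filter_upwards [hC0ae, hW0ae, hW02ae, heqCae, heqW1ae, heqW2ae] with ω hC0ω hW0ω hW02ω
    heqCω heqW1ω heqW2ω
  -- the fixed-ω development
  obtain ⟨f, hf_def⟩ : ∃ f : ℝ → ℝ, f = fun s => ‖(fun i => Chat s i ω)‖ := ⟨_, rfl⟩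
  have hf0 : ∀ s, 0 ≤ f s := fun s => hf_def ▸ norm_nonneg _
  have hfb : ∀ s i, |Chat s i ω| ≤ f s := by
    intro s i
    simp only [hf_def]
    simpa using norm_le_pi_norm (fun i => Chat s i ω) i
  have hfc : ContinuousOn f (Set.Icc 0 1) := by
    simp only [hf_def]
    exact (continuousOn_pi.mpr fun i => hCc ω i).norm
  have hfint : IntegrableOn f (Set.Icc 0 1) := hfc.integrableOn_Icc
  have hg : ∀ (s : ℝ) (x : Euc d), |gN σ Chat Zhat s x ω| ≤ B * f s := by
    intro s x
    simp only [gN]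
    refine avg_abs_le hN₂ _ (fun i => ?_)
    rw [abs_mul]
    calc |Chat s i ω| * |σ (Zhat s i x ω)| ≤ f s * B :=
          mul_le_mul (hfb s i) (hB _) (abs_nonneg _) (hf0 s)
    _ = B * f s := mul_comm _ _
  have hiInner : ∀ (s : ℝ) (i : Fin N₂),
      ‖∫ p, (p.2 - gN σ Chat Zhat s p.1 ω) * σ (Zhat s i p.1 ω) ∂π‖ ≤ B*RY + b * f s := by
    intro s i
    have hbd : ∀ᵐ p ∂π, ‖(p.2 - gN σ Chat Zhat s p.1 ω) * σ (Zhat s i p.1 ω)‖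
        ≤ (RY + B * f s) * B := by
      filter_upwards [hπae] with p hp
      rw [Real.norm_eq_abs, abs_mul]
      have h1 : |p.2| ≤ RY := by have := hRY p.2 hp.2; rwa [Real.norm_eq_abs] at this
      have e1 : |p.2 - gN σ Chat Zhat s p.1 ω| ≤ RY + B * f s :=
        (abs_sub _ _).trans (add_le_add h1 (hg s p.1))
      exact mul_le_mul e1 (hB _) (abs_nonneg _) (add_nonneg hRY0 (mul_nonneg hB0 (hf0 s)))
    refine le_trans (norm_integral_le_of_norm_le_const hbd) ?_
    rw [probReal_univ, mul_one, hb_def]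
    exact le_of_eq (by ring)
  have keyQ : ∀ q : ℚ, (q:ℝ) ∈ Set.Icc (0:ℝ) 1 →
      f q ≤ RC + B*RY*(q:ℝ) + b * ∫ s in Set.Ioc (0:ℝ) (q:ℝ), f s := by
    intro q hq
    have hq0 : (0:ℝ) ≤ (q:ℝ) := hq.1
    have hIccsub : Set.Icc (0:ℝ) (q:ℝ) ⊆ Set.Icc (0:ℝ) 1 := Set.Icc_subset_Icc_right hq.2
    have hIntf : IntegrableOn f (Set.Icc (0:ℝ) (q:ℝ)) := hfint.mono_set hIccsub
    have hintnn : 0 ≤ ∫ s in Set.Ioc (0:ℝ) (q:ℝ), f s :=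
      setIntegral_nonneg measurableSet_Ioc fun s _ => hf0 s
    have hBRYq : 0 ≤ B*RY*(q:ℝ) := mul_nonneg (mul_nonneg hB0 hRY0) hq0
    have hRHS0 : 0 ≤ RC + B*RY*(q:ℝ) + b * ∫ s in Set.Ioc (0:ℝ) (q:ℝ), f s := by
      nlinarith [mul_nonneg hb0 hintnn]
    have hfq : f (q:ℝ) = ‖(fun i => Chat (q:ℝ) i ω)‖ := by rw [hf_def]
    rw [hfq, pi_norm_le_iff_of_nonneg hRHS0]
    intro i
    rw [Real.norm_eq_abs, heqCω q hq i]
    have hC0b : |C0 i ω| ≤ RC := by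
      have := hRC _ (hC0ω i); rwa [Real.norm_eq_abs] at this
    have h2 : |∫ s in Set.Icc (0:ℝ) (q:ℝ),
        (∫ p, (p.2 - gN σ Chat Zhat s p.1 ω) * σ (Zhat s i p.1 ω) ∂π)|
        ≤ B*RY*(q:ℝ) + b * ∫ s in Set.Ioc (0:ℝ) (q:ℝ), f s := by
      by_cases hm : IntegrableOn
          (fun s => ∫ p, (p.2 - gN σ Chat Zhat s p.1 ω) * σ (Zhat s i p.1 ω) ∂π)
          (Set.Icc (0:ℝ) (q:ℝ))
      · rw [← Real.norm_eq_abs]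
        refine le_trans (norm_integral_le_integral_norm _) ?_
        have hconstint : IntegrableOn (fun _ : ℝ => B*RY) (Set.Icc (0:ℝ) (q:ℝ)) :=
          integrableOn_const measure_Icc_lt_top.ne
        have hInt2 : IntegrableOn (fun s => B*RY + b * f s) (Set.Icc (0:ℝ) (q:ℝ)) :=
          hconstint.add (hIntf.const_mul b)
        have hmono := integral_mono hm.norm hInt2 (fun s => hiInner s i)
        refine hmono.trans (le_of_eq ?_)
        rw [integral_add hconstint (hIntf.const_mul b), setIntegral_const,
          MeasureTheory.integral_const_mul, MeasureTheory.integral_Icc_eq_integral_Ioc,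
          Real.volume_real_Icc_of_le hq0, smul_eq_mul]
        ring
      · rw [MeasureTheory.integral_undef hm]
        simp only [abs_zero]
        nlinarith [mul_nonneg hb0 hintnn]
    refine le_trans (abs_add_le _ _) ?_
    have := add_le_add hC0b h2
    linarith
  have hprim : ContinuousOn (fun t => ∫ s in Set.Ioc (0:ℝ) t, f s) (Set.Icc 0 1) :=
    intervalIntegral.continuousOn_primitive hfint
  have key : ∀ t ∈ Set.Icc (0:ℝ) 1,
      f t ≤ RC + B*RY*t + b * ∫ s in Set.Ioc (0:ℝ) t, f s := by
    have hcont : ContinuousOn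
        (fun t => f t - (RC + B*RY*t + b * ∫ s in Set.Ioc (0:ℝ) t, f s)) (Set.Icc 0 1) :=
      hfc.sub ((continuousOn_const.add
        ((continuous_const.mul continuous_id).continuousOn)).add
        (continuousOn_const.mul hprim))
    have h := rat_dense_le _ hcont (fun q hq => sub_nonpos.mpr (keyQ q hq))
    intro t ht
    exact sub_nonpos.mp (h t ht)
  -- Gronwall iteration
  have hn0 : (0:ℝ) < (n:ℝ) := by
    rw [hn_def]; exact_mod_cast Nat.succ_pos _
  have hn2b : 2*b ≤ (n:ℝ) := by
    have h1 : 2*b ≤ (⌈2*b⌉₊ : ℝ) := Nat.le_ceil _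
    rw [hn_def]
    push_cast
    linarith
  have gron : ∀ k : ℕ, k ≤ n → ∀ t ∈ Set.Icc (0:ℝ) ((k:ℝ)/(n:ℝ)), f t ≤ a * (2+2*b)^k := by
    intro k
    induction k with
    | zero =>
      intro _ t ht
      have ht0 : t = 0 := le_antisymm (by simpa using ht.2) ht.1
      subst ht0
      have h0 := key 0 ⟨le_refl 0, zero_le_one⟩
      have hIoc : ∫ s in Set.Ioc (0:ℝ) 0, f s = 0 := by simp
      rw [hIoc] at h0
      rw [pow_zero, mul_one, ha_def]
      have := mul_nonneg hB0 hRY0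
      linarith
    | succ k ih =>
      intro hk1 t ht
      have hkn : k ≤ n := Nat.le_of_succ_le hk1
      have hIH := ih hkn
      have hck0 : 0 ≤ a*(2+2*b)^k := mul_nonneg ha0 (pow_nonneg (by linarith) _)
      obtain ⟨u, hu_def⟩ : ∃ u : ℝ, u = (k:ℝ)/(n:ℝ) := ⟨_, rfl⟩
      obtain ⟨v, hv_def⟩ : ∃ v : ℝ, v = ((k:ℝ)+1)/(n:ℝ) := ⟨_, rfl⟩
      have hu0 : 0 ≤ u := hu_def ▸ div_nonneg (Nat.cast_nonneg k) hn0.le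
      have huv : u ≤ v := by
        rw [hu_def, hv_def]
        gcongr
        linarith
      have hv1 : v ≤ 1 := by
        rw [hv_def, div_le_one hn0]
        exact_mod_cast hk1
      have hu1 : u ≤ 1 := huv.trans hv1
      have hIcc : Set.Icc (0:ℝ) v ⊆ Set.Icc 0 1 := Set.Icc_subset_Icc_right hv1
      obtain ⟨ts, hts, htsmax⟩ := (isCompact_Icc : IsCompact (Set.Icc (0:ℝ) v)).exists_isMaxOn
        ⟨0, Set.left_mem_Icc.mpr (hu0.trans huv)⟩ (hfc.mono hIcc)
      have hMb : ∀ r ∈ Set.Icc (0:ℝ) v, f r ≤ f ts := fun r hr => htsmax hr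
      have hM0 : 0 ≤ f ts := hf0 ts
      have hvcast : ((k+1 : ℕ):ℝ)/(n:ℝ) = v := by rw [hv_def]; push_cast; ring
      have htv : t ∈ Set.Icc (0:ℝ) v := by
        refine ⟨ht.1, ?_⟩
        have := ht.2
        rwa [hvcast] at this
      refine le_trans (hMb t htv) ?_
      by_cases hcase : ts ≤ u
      · refine le_trans (hIH ts ⟨hts.1, hu_def ▸ hcase⟩) ?_
        rw [pow_succ, ← mul_assoc]
        exact le_mul_of_one_le_right hck0 honeple
      · push_neg at hcase
        have hts1 : ts ∈ Set.Icc (0:ℝ) 1 := hIcc hts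
        have hkey := key ts hts1
        have hint1 : IntegrableOn f (Set.Ioc 0 u) :=
          hfint.mono_set ((Set.Ioc_subset_Icc_self).trans (Set.Icc_subset_Icc_right hu1))
        have hint2 : IntegrableOn f (Set.Ioc u ts) :=
          hfint.mono_set (fun s hs => ⟨hu0.trans hs.1.le, hs.2.trans hts1.2⟩)
        have hsplit : ∫ s in Set.Ioc (0:ℝ) ts, f s
            = (∫ s in Set.Ioc (0:ℝ) u, f s) + ∫ s in Set.Ioc u ts, f s := by
          rw [← MeasureTheory.setIntegral_union (Set.Ioc_disjoint_Ioc_of_le le_rfl) measurableSet_Ioc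
            hint1 hint2, Set.Ioc_union_Ioc_eq_Ioc hu0 hcase.le]
        have h1 : ∫ s in Set.Ioc (0:ℝ) u, f s ≤ a*(2+2*b)^k := by
          have hc : ∫ s in Set.Ioc (0:ℝ) u, f s ≤ ∫ _s in Set.Ioc (0:ℝ) u, a*(2+2*b)^k :=
            setIntegral_mono_on hint1 (integrableOn_const measure_Ioc_lt_top.ne)
              measurableSet_Ioc (fun s hs => hIH s ⟨hs.1.le, hu_def ▸ hs.2⟩)
          refine hc.trans ?_
          rw [setIntegral_const, smul_eq_mul, Real.volume_real_Ioc_of_le hu0]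
          nlinarith [hu0, hu1, hck0]
        have h2 : ∫ s in Set.Ioc u ts, f s ≤ f ts * (1/(n:ℝ)) := by
          have hc : ∫ s in Set.Ioc u ts, f s ≤ ∫ _s in Set.Ioc u ts, f ts :=
            setIntegral_mono_on hint2 (integrableOn_const measure_Ioc_lt_top.ne)
              measurableSet_Ioc (fun s hs => hMb s ⟨hu0.trans hs.1.le, hs.2.trans hts.2⟩)
          refine hc.trans ?_
          rw [setIntegral_const, smul_eq_mul, Real.volume_real_Ioc_of_le hcase.le]
          have hvu : v - u = 1/(n:ℝ) := by
            rw [hu_def, hv_def]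
            field_simp
            ring
          have hq : ts - u ≤ 1/(n:ℝ) := by
            have := hts.2
            linarith
          nlinarith [hM0, hq, hu0, hcase]
        have hBRYts : B*RY*ts ≤ B*RY := by
          nlinarith [hts1.2, hts1.1, mul_nonneg hB0 hRY0]
        have hsum : b * ∫ s in Set.Ioc (0:ℝ) ts, f s
            ≤ b * (a*(2+2*b)^k + f ts * (1/(n:ℝ))) := by
          rw [hsplit]
          exact mul_le_mul_of_nonneg_left (add_le_add h1 h2) hb0
        have hhalf : b * (f ts * (1/(n:ℝ))) ≤ f ts / 2 := by
          have h1 : b * (f ts * (1/(n:ℝ))) = (b * f ts) / (n:ℝ) := by ring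
          rw [h1, div_le_div_iff₀ hn0 (by norm_num : (0:ℝ) < 2)]
          nlinarith [hM0, hn2b]
        have hM2 : f ts ≤ a + b * (a*(2+2*b)^k) + f ts / 2 := by
          have hexp : b * (a*(2+2*b)^k + f ts * (1/(n:ℝ)))
              = b * (a*(2+2*b)^k) + b * (f ts * (1/(n:ℝ))) := by ring
          rw [hexp] at hsum
          linarith [hkey, hhalf, hBRYts, ha_def.le, ha_def.ge]
        have hMfin : f ts ≤ 2*a + 2*(b * (a*(2+2*b)^k)) := by linarith
        refine hMfin.trans ?_
        have hp1 : (1:ℝ) ≤ (2+2*b)^k := one_le_pow₀ honeple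
        rw [pow_succ]
        nlinarith [mul_le_mul_of_nonneg_left hp1 ha0, mul_nonneg ha0 hb0,
          mul_nonneg (mul_nonneg ha0 hb0) (pow_nonneg (by linarith : (0:ℝ) ≤ 2+2*b) k)]
  have hK1f : ∀ t ∈ Set.Icc (0:ℝ) 1, f t ≤ K1 := by
    intro t ht
    have hnn : ((n:ℝ))/(n:ℝ) = 1 := div_self hn0.ne'
    have := gron n le_rfl t (by rw [hnn]; exact ht)
    rwa [hK1_def]
  have hChat : ∀ t ∈ Set.Icc (0:ℝ) 1, ∀ i, |Chat t i ω| ≤ K1 :=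
    fun t ht i => (hfb t i).trans (hK1f t ht)
  have hgK : ∀ t ∈ Set.Icc (0:ℝ) 1, ∀ x : Euc d, |gN σ Chat Zhat t x ω| ≤ B * K1 :=
    fun t ht x => (hg t x).trans (mul_le_mul_of_nonneg_left (hK1f t ht) hB0)
  have hnn1 : (0:ℝ) ≤ RY + B*K1 := add_nonneg hRY0 (mul_nonneg hB0 hK10)
  -- W2 bound
  have hW2 : ∀ (i : Fin N₂), ∀ t ∈ Set.Icc (0:ℝ) 1, |W2hat t i ω| ≤ K2 := by
    intro i
    have hQ : ∀ q : ℚ, (q:ℝ) ∈ Set.Icc (0:ℝ) 1 → |W2hat (q:ℝ) i ω| ≤ K2 := by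
      intro q hq
      rw [heqW2ω q hq i]
      have h1 : |W02 i ω| ≤ RW2 := by
        have := hRW2 _ (hW02ω i); rwa [Real.norm_eq_abs] at this
      have h2 : ‖∫ s in Set.Icc (0:ℝ) (q:ℝ), (∫ p, (p.2 - gN σ Chat Zhat s p.1 ω) * Chat s i ω *
          deriv σ (Zhat s i p.1 ω) * σ (⟪W1hat s ω, p.1⟫) ∂π)‖ ≤ C2 := by
        haveI : IsFiniteMeasure (volume.restrict (Set.Icc (0:ℝ) (q:ℝ))) :=
          ⟨by rw [Measure.restrict_apply_univ]; exact measure_Icc_lt_top⟩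
        have hbd : ∀ᵐ s ∂(volume.restrict (Set.Icc (0:ℝ) (q:ℝ))),
            ‖∫ p, (p.2 - gN σ Chat Zhat s p.1 ω) * Chat s i ω *
              deriv σ (Zhat s i p.1 ω) * σ (⟪W1hat s ω, p.1⟫) ∂π‖ ≤ C2 := by
          filter_upwards [ae_restrict_mem measurableSet_Icc] with s hs
          have hs1 : s ∈ Set.Icc (0:ℝ) 1 := Set.Icc_subset_Icc_right hq.2 hs
          have hbd2 : ∀ᵐ p ∂π, ‖(p.2 - gN σ Chat Zhat s p.1 ω) * Chat s i ω *
              deriv σ (Zhat s i p.1 ω) * σ (⟪W1hat s ω, p.1⟫)‖ ≤ C2 := by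
            filter_upwards [hπae] with p hp
            rw [Real.norm_eq_abs, abs_mul, abs_mul, abs_mul]
            have h1' : |p.2| ≤ RY := by
              have := hRY p.2 hp.2; rwa [Real.norm_eq_abs] at this
            have e1 : |p.2 - gN σ Chat Zhat s p.1 ω| ≤ RY + B*K1 :=
              (abs_sub _ _).trans (add_le_add h1' (hgK s hs1 p.1))
            rw [hC2_def]
            exact mul_le_mul (mul_le_mul (mul_le_mul e1 (hChat s hs1 i) (abs_nonneg _) hnn1)
              (hB' _) (abs_nonneg _) (mul_nonneg hnn1 hK10))
              (hB _) (abs_nonneg _) (mul_nonneg (mul_nonneg hnn1 hK10) hB0)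
          refine le_trans (norm_integral_le_of_norm_le_const hbd2) ?_
          rw [probReal_univ, mul_one]
        refine le_trans (norm_integral_le_of_norm_le_const hbd) ?_
        rw [measureReal_restrict_apply_univ, Real.volume_real_Icc_of_le hq.1]
        nlinarith [hq.1, hq.2, hC20]
      refine le_trans (abs_add_le _ _) ?_
      rw [hK2_def]
      exact add_le_add h1 (by rwa [Real.norm_eq_abs] at h2)
    have hext := rat_dense_le (fun t => |W2hat t i ω| - K2)
      (((hW2c ω i).abs).sub continuousOn_const) (fun q hq => sub_nonpos.mpr (hQ q hq))
    intro t ht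
    exact sub_nonpos.mp (hext t ht)
  -- VN bound
  have hVN : ∀ t ∈ Set.Icc (0:ℝ) 1, ∀ x : Euc d,
      |VN σ Chat W2hat Zhat t x ω| ≤ B * (K1*K2) := by
    intro t ht x
    simp only [VN]
    refine avg_abs_le hN₂ _ (fun i => ?_)
    rw [abs_mul, abs_mul]
    calc |Chat t i ω| * |deriv σ (Zhat t i x ω)| * |W2hat t i ω| ≤ K1 * B * K2 :=
          mul_le_mul (mul_le_mul (hChat t ht i) (hB' _) (abs_nonneg _) hK10)
            (hW2 i t ht) (abs_nonneg _) (mul_nonneg hK10 hB0)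
    _ = B * (K1*K2) := by ring
  -- W1 bound
  have hW1 : ∀ t ∈ Set.Icc (0:ℝ) 1, ‖W1hat t ω‖ ≤ K3 := by
    have hQ : ∀ q : ℚ, (q:ℝ) ∈ Set.Icc (0:ℝ) 1 → ‖W1hat (q:ℝ) ω‖ ≤ K3 := by
      intro q hq
      rw [heqW1ω q hq]
      refine le_trans (norm_add_le _ _) ?_
      rw [hK3_def]
      refine add_le_add (hRW1 _ hW0ω) ?_
      haveI : IsFiniteMeasure (volume.restrict (Set.Icc (0:ℝ) (q:ℝ))) :=
        ⟨by rw [Measure.restrict_apply_univ]; exact measure_Icc_lt_top⟩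
      have hbd : ∀ᵐ s ∂(volume.restrict (Set.Icc (0:ℝ) (q:ℝ))),
          ‖∫ p, ((p.2 - gN σ Chat Zhat s p.1 ω) * VN σ Chat W2hat Zhat s p.1 ω *
            deriv σ (⟪W1hat s ω, p.1⟫)) • p.1 ∂π‖ ≤ C3 := by
        filter_upwards [ae_restrict_mem measurableSet_Icc] with s hs
        have hs1 : s ∈ Set.Icc (0:ℝ) 1 := Set.Icc_subset_Icc_right hq.2 hs
        have hbd2 : ∀ᵐ p ∂π, ‖((p.2 - gN σ Chat Zhat s p.1 ω) * VN σ Chat W2hat Zhat s p.1 ω *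
            deriv σ (⟪W1hat s ω, p.1⟫)) • p.1‖ ≤ C3 := by
          filter_upwards [hπae] with p hp
          rw [norm_smul, Real.norm_eq_abs, abs_mul, abs_mul]
          have h1' : |p.2| ≤ RY := by
            have := hRY p.2 hp.2; rwa [Real.norm_eq_abs] at this
          have e1 : |p.2 - gN σ Chat Zhat s p.1 ω| ≤ RY + B*K1 :=
            (abs_sub _ _).trans (add_le_add h1' (hgK s hs1 p.1))
          rw [hC3_def]
          exact mul_le_mul (mul_le_mul (mul_le_mul e1 (hVN s hs1 p.1) (abs_nonneg _) hnn1)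
            (hB' _) (abs_nonneg _)
            (mul_nonneg hnn1 (mul_nonneg hB0 (mul_nonneg hK10 hK20))))
            (hRX p.1 hp.1) (norm_nonneg _)
            (mul_nonneg (mul_nonneg hnn1
              (mul_nonneg hB0 (mul_nonneg hK10 hK20))) hB0)
        refine le_trans (norm_integral_le_of_norm_le_const hbd2) ?_
        rw [probReal_univ, mul_one]
      refine le_trans (norm_integral_le_of_norm_le_const hbd) ?_
      rw [measureReal_restrict_apply_univ, Real.volume_real_Icc_of_le hq.1]
      nlinarith [hq.1, hq.2, hC30]
    have hext := rat_dense_le (fun t => ‖W1hat t ω‖ - K3)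
      (((hW1c ω).norm).sub continuousOn_const) (fun q hq => sub_nonpos.mpr (hQ q hq))
    intro t ht
    exact sub_nonpos.mp (hext t ht)
  -- conclusion
  intro t ht
  have m1 : K1 ≤ max K1 (max K2 (max K3 (max (B*K1) (B*(K1*K2))))) := le_max_left _ _
  have m2 : K2 ≤ max K1 (max K2 (max K3 (max (B*K1) (B*(K1*K2))))) :=
    (le_max_left _ _).trans (le_max_right _ _)
  have m3 : K3 ≤ max K1 (max K2 (max K3 (max (B*K1) (B*(K1*K2))))) :=
    ((le_max_left _ _).trans (le_max_right _ _)).trans (le_max_right _ _)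
  have m4 : B*K1 ≤ max K1 (max K2 (max K3 (max (B*K1) (B*(K1*K2))))) :=
    (((le_max_left _ _).trans (le_max_right _ _)).trans (le_max_right _ _)).trans
      (le_max_right _ _)
  have m5 : B*(K1*K2) ≤ max K1 (max K2 (max K3 (max (B*K1) (B*(K1*K2))))) :=
    (((le_max_right _ _).trans (le_max_right _ _)).trans (le_max_right _ _)).trans
      (le_max_right _ _)
  exact ⟨fun i => (hChat t ht i).trans m1, (hW1 t ht).trans m3,
    fun i => (hW2 i t ht).trans m2, fun x _ => (hgK t ht x).trans m4,
    fun x _ => (hVN t ht x).trans m5⟩
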